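/- In the major-minor mean-field model, the pair (Z_t, X^0_t) is a controlled Markov process with controls (γ_t, U^0_t): for any realization, P(Z_{t+1}=z, X^0_{t+1}=x^0 | Z_{1:t}, X^0_{1:t}, γ_{1:t}, U^0_{1:t}) = P(Z_{t+1}=z, X^0_{t+1}=x^0 | Z_t, X^0_t, γ_t, U^0_t). -/

import Mathlib

open scoped ENNReal

set_option synthInstance.maxSize 400

noncomputable section

/-- Empirical distribution (mean field) of a tuple of `n` points in a finite set `X`. -/
def emp {X : Type*} [Fintype X] [DecidableEq X] {n : ℕ} (x : Fin n → X) : X → ℝ :=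
  fun a => ((Finset.univ.filter fun i => x i = a).card : ℝ) / n

variable {X X0 U U0 W W0 : Type*}

/-- Closed-loop joint (major, minor) state process of the major-minor mean-field system
on the canonical sample space (initial states and noises):
`X⁰_{t+1} = f⁰(Z_t, X⁰_t, U⁰_t, W⁰_t)` and
`Xⁱ_{t+1} = f(Z_t, X⁰_t, Xⁱ_t, γ_t(Xⁱ_t), Wⁱ_t)`, where the prescription `γ_t` and the
major action `U⁰_t` are functions of `(Z_{0:t}, X⁰_{0:t})`. -/
def mmState [Fintype X] [DecidableEq X] [Inhabited W] [Inhabited W0] {n T : ℕ}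
    (f0 : (X → ℝ) → X0 → U0 → W0 → X0)
    (f : (X → ℝ) → X0 → X → U → W → X)
    (ψ0 : (t : ℕ) → (Fin (t + 1) → (X → ℝ)) → (Fin (t + 1) → X0) → U0)
    (ψ : (t : ℕ) → (Fin (t + 1) → (X → ℝ)) → (Fin (t + 1) → X0) → X → U)
    (ω : X0 × (Fin n → X) × (Fin T → W0) × (Fin T → Fin n → W)) :
    ℕ → X0 × (Fin n → X)
  | 0 => (ω.1, ω.2.1)
  | t + 1 =>
      (f0 (emp (mmState f0 f ψ0 ψ ω t).2) (mmState f0 f ψ0 ψ ω t).1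
        (ψ0 t (fun s : Fin (t + 1) => emp (mmState f0 f ψ0 ψ ω s).2)
          (fun s : Fin (t + 1) => (mmState f0 f ψ0 ψ ω s).1))
        (if h : t < T then ω.2.2.1 ⟨t, h⟩ else default),
      fun i =>
        f (emp (mmState f0 f ψ0 ψ ω t).2) (mmState f0 f ψ0 ψ ω t).1
          ((mmState f0 f ψ0 ψ ω t).2 i)
          (ψ t (fun s : Fin (t + 1) => emp (mmState f0 f ψ0 ψ ω s).2)
            (fun s : Fin (t + 1) => (mmState f0 f ψ0 ψ ω s).1)
            ((mmState f0 f ψ0 ψ ω t).2 i))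
          (if h : t < T then ω.2.2.2 ⟨t, h⟩ i else default))
  termination_by t => t
  decreasing_by all_goals first | exact s.isLt | omega

/-!
Split the sample space at time `t` into the noises `(W⁰_t, W_t)` and everything else. Events
determined by the history up to time `t` depend only on the second part, while
`(Z_{t+1}, X⁰_{t+1})` is a function of `(Z_t, X⁰_t, γ_t, U⁰_t)`, the minor states at `t` and the
fresh noise. Hence on any such event on which `(Z_t, X⁰_t, γ_t, U⁰_t)` is fixed, the conditional
probability of `(Z_{t+1}, X⁰_{t+1}) = (z', x⁰')` is the product of a major-noise probability and
the probability that the minor agents' empirical distribution moves to `z'`. The latter depends on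
the minor states only through `Z_t`: permuting the agents permutes i.i.d. noises. So both
conditional probabilities equal the same number.
-/

open Finset

theorem emp_comp_perm [Fintype X] [DecidableEq X] {n : ℕ} (x : Fin n → X)
    (σ : Equiv.Perm (Fin n)) : emp (x ∘ σ) = emp x := by
  funext a
  simp only [emp, Function.comp_apply]
  congr 2
  exact card_bij' (fun i _ => σ i) (fun j _ => σ.symm j) (by simp_all) (by simp_all)
    (by simp) (by simp)

theorem exists_perm_of_emp_eq [Fintype X] [DecidableEq X] {n : ℕ} {x x' : Fin n → X}
    (h : emp x = emp x') : ∃ σ : Equiv.Perm (Fin n), x ∘ σ = x' := by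
  have hcard : ∀ a, #{i | x' i = a} = #{i | x i = a} := by
    intro a
    rcases Nat.eq_zero_or_pos n with rfl | hn
    · simp
    · have := congrFun h a
      simp only [emp] at this
      exact_mod_cast ((div_left_inj' (by positivity)).mp this).symm
  refine ⟨Equiv.ofFiberEquiv (f := x') (g := x) fun a => Fintype.equivOfCardEq ?_,
    funext fun i => Equiv.ofFiberEquiv_map _ i⟩
  simp [Fintype.card_subtype, hcard]

def empStepProb [Fintype X] [DecidableEq X] [Fintype W] {n : ℕ} (g : X → W → X)
    (ν : W → ℝ≥0∞) (x : Fin n → X) (z' : X → ℝ) : ℝ≥0∞ :=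
  ∑ w : Fin n → W with emp (fun i => g (x i) (w i)) = z', ∏ i, ν (w i)

theorem empStepProb_comp_perm [Fintype X] [DecidableEq X] [Fintype W] {n : ℕ}
    (g : X → W → X) (ν : W → ℝ≥0∞) (x : Fin n → X) (σ : Equiv.Perm (Fin n)) (z' : X → ℝ) :
    empStepProb g ν (x ∘ σ) z' = empStepProb g ν x z' := by
  unfold empStepProb
  refine sum_equiv (Equiv.arrowCongr σ (Equiv.refl W)) (fun w => ?_) (fun w _ => ?_)
  · have : (fun i => g (x i) (Equiv.arrowCongr σ (Equiv.refl W) w i)) ∘ σ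
        = fun i => g ((x ∘ σ) i) (w i) := by
      funext i; simp [Equiv.arrowCongr]
    simp only [mem_filter, mem_univ, true_and, ← this, emp_comp_perm]
  · simp only [Equiv.arrowCongr_apply, Equiv.coe_refl, Function.id_comp]
    exact (Equiv.prod_comp σ.symm fun i => ν (w i)).symm

theorem empStepProb_eq_of_emp_eq [Fintype X] [DecidableEq X] [Fintype W] {n : ℕ}
    (g : X → W → X) (ν : W → ℝ≥0∞) {x x' : Fin n → X} (h : emp x = emp x') (z' : X → ℝ) :
    empStepProb g ν x z' = empStepProb g ν x' z' := by
  obtain ⟨σ, rfl⟩ := exists_perm_of_emp_eq h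
  exact (empStepProb_comp_perm g ν x σ z').symm

theorem sum_inter_eq_sum_mul_of_prod {α β Ω : Type*} [Fintype α] [Fintype β] [Fintype Ω]
    [DecidableEq Ω]
    (e : α × β ≃ Ω) (m : Ω → ℝ≥0∞) (M : α → ℝ≥0∞) (N : β → ℝ≥0∞)
    (hm : ∀ a b, m (e (a, b)) = M a * N b) (hN : ∑ b, N b = 1)
    (S C : Finset Ω) (P : Finset α) (hS : ∀ a b, e (a, b) ∈ S ↔ a ∈ P) (K : ℝ≥0∞)
    (hK : ∀ a ∈ P, ∑ b with e (a, b) ∈ C, N b = K) :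
    ∑ ω ∈ S ∩ C, m ω = (∑ ω ∈ S, m ω) * K := by
  have hsum : ∀ D : Finset Ω, ∑ ω ∈ D, m ω = ∑ a, ∑ b, if e (a, b) ∈ D then M a * N b else 0 := by
    intro D
    rw [← sum_ite_mem_eq, ← e.sum_comp, Fintype.sum_prod_type]
    simp only [hm]
  rw [hsum, hsum, sum_mul]
  refine sum_congr rfl fun a _ => ?_
  by_cases ha : a ∈ P
  · simp only [mem_inter, hS, ha, true_and, if_true, ← mul_sum, ← sum_filter, hK a ha, hN,
      mul_one]
  · simp [hS, ha]

/-- Sample points: initial major state, initial minor states, major noises, minor noises, the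
noises indexed by the time steps `ι`. -/
abbrev MMSample (X0 X W0 W : Type*) (n : ℕ) (ι : Type*) :=
  X0 × (Fin n → X) × (ι → W0) × (ι → Fin n → W)

def sampleMass {n : ℕ} {ι : Type*} [Fintype ι] (ρ0 : X0 → ℝ≥0∞) (ρ : X → ℝ≥0∞)
    (ν0 : W0 → ℝ≥0∞) (ν : W → ℝ≥0∞) (ω : MMSample X0 X W0 W n ι) : ℝ≥0∞ :=
  ρ0 ω.1 * (∏ i, ρ (ω.2.1 i)) * (∏ t, ν0 (ω.2.2.1 t)) * ∏ t, ∏ i, ν (ω.2.2.2 t i)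

theorem sum_sampleMass [Fintype X0] [Fintype X] [Fintype W0] [Fintype W] {n : ℕ} {ι : Type*}
    [Fintype ι] [DecidableEq ι] {ρ0 : X0 → ℝ≥0∞} {ρ : X → ℝ≥0∞} {ν0 : W0 → ℝ≥0∞}
    {ν : W → ℝ≥0∞} (hρ0 : ∑ x, ρ0 x = 1) (hρ : ∑ x, ρ x = 1) (hν0 : ∑ w, ν0 w = 1)
    (hν : ∑ w, ν w = 1) :
    ∑ ω : MMSample X0 X W0 W n ι, sampleMass ρ0 ρ ν0 ν ω = 1 := by
  simp only [sampleMass, Fintype.sum_prod_type, ← mul_sum, ← sum_mul, ← Fintype.prod_sum, hρ0, hρ,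
    hν0, prod_const_one, one_mul]
  rw [← Fintype.prod_sum fun (_ : ι) (v : Fin n → W) => ∏ i, ν (v i)]
  simp only [← Fintype.sum_pow, hν, one_pow, prod_const_one]

def splitNoiseAt {n : ℕ} {ι : Type*} [DecidableEq ι] (τ : ι) :
    MMSample X0 X W0 W n {j // j ≠ τ} × (W0 × (Fin n → W)) ≃ MMSample X0 X W0 W n ι where
  toFun p := (p.1.1, p.1.2.1, (Equiv.funSplitAt τ W0).symm (p.2.1, p.1.2.2.1),
    (Equiv.funSplitAt τ (Fin n → W)).symm (p.2.2, p.1.2.2.2))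
  invFun ω := ((ω.1, ω.2.1, (Equiv.funSplitAt τ W0 ω.2.2.1).2,
    (Equiv.funSplitAt τ (Fin n → W) ω.2.2.2).2), (ω.2.2.1 τ, ω.2.2.2 τ))
  left_inv p := by simp
  right_inv ω := Prod.ext rfl <| Prod.ext rfl <|
    Prod.ext ((Equiv.funSplitAt τ W0).symm_apply_apply _)
      ((Equiv.funSplitAt τ (Fin n → W)).symm_apply_apply _)

section Split

variable {n : ℕ} {ι : Type*} [DecidableEq ι] (τ : ι)
  (r : MMSample X0 X W0 W n {j // j ≠ τ}) (a : W0) (b : Fin n → W)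

@[simp]
theorem splitNoiseAt_fst : (splitNoiseAt τ (r, (a, b))).1 = r.1 := rfl

@[simp]
theorem splitNoiseAt_snd_fst : (splitNoiseAt τ (r, (a, b))).2.1 = r.2.1 := rfl

@[simp]
theorem splitNoiseAt_majorNoise_self : (splitNoiseAt τ (r, (a, b))).2.2.1 τ = a := by
  simp [splitNoiseAt]

@[simp]
theorem splitNoiseAt_minorNoise_self : (splitNoiseAt τ (r, (a, b))).2.2.2 τ = b := by
  simp [splitNoiseAt]

@[simp]
theorem splitNoiseAt_majorNoise_coe (j : {j // j ≠ τ}) :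
    (splitNoiseAt τ (r, (a, b))).2.2.1 j = r.2.2.1 j := by
  simp [splitNoiseAt, j.prop]

@[simp]
theorem splitNoiseAt_minorNoise_coe (j : {j // j ≠ τ}) :
    (splitNoiseAt τ (r, (a, b))).2.2.2 j = r.2.2.2 j := by
  simp [splitNoiseAt, j.prop]

theorem sampleMass_splitNoiseAt [Fintype ι] (ρ0 : X0 → ℝ≥0∞) (ρ : X → ℝ≥0∞)
    (ν0 : W0 → ℝ≥0∞) (ν : W → ℝ≥0∞) :
    sampleMass ρ0 ρ ν0 ν (splitNoiseAt τ (r, (a, b)))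
      = sampleMass ρ0 ρ ν0 ν r * (ν0 a * ∏ i, ν (b i)) := by
  simp only [sampleMass, Fintype.prod_eq_mul_prod_subtype_ne _ τ, splitNoiseAt_fst,
    splitNoiseAt_snd_fst, splitNoiseAt_majorNoise_self, splitNoiseAt_minorNoise_self,
    splitNoiseAt_majorNoise_coe, splitNoiseAt_minorNoise_coe]
  ring

end Split

section State

variable [Fintype X] [DecidableEq X] [Inhabited W] [Inhabited W0] {n T : ℕ}
  (f0 : (X → ℝ) → X0 → U0 → W0 → X0) (f : (X → ℝ) → X0 → X → U → W → X)
  (ψ0 : (t : ℕ) → (Fin (t + 1) → (X → ℝ)) → (Fin (t + 1) → X0) → U0)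
  (ψ : (t : ℕ) → (Fin (t + 1) → (X → ℝ)) → (Fin (t + 1) → X0) → X → U)

theorem mmState_succ_of_lt (ω : MMSample X0 X W0 W n (Fin T)) {t : ℕ} (ht : t < T) :
    mmState f0 f ψ0 ψ ω (t + 1) =
      (f0 (emp (mmState f0 f ψ0 ψ ω t).2) (mmState f0 f ψ0 ψ ω t).1
        (ψ0 t (fun s : Fin (t + 1) => emp (mmState f0 f ψ0 ψ ω s).2)
          (fun s : Fin (t + 1) => (mmState f0 f ψ0 ψ ω s).1))
        (ω.2.2.1 ⟨t, ht⟩),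
      fun i =>
        f (emp (mmState f0 f ψ0 ψ ω t).2) (mmState f0 f ψ0 ψ ω t).1
          ((mmState f0 f ψ0 ψ ω t).2 i)
          (ψ t (fun s : Fin (t + 1) => emp (mmState f0 f ψ0 ψ ω s).2)
            (fun s : Fin (t + 1) => (mmState f0 f ψ0 ψ ω s).1)
            ((mmState f0 f ψ0 ψ ω t).2 i))
          (ω.2.2.2 ⟨t, ht⟩ i)) := by
  rw [mmState]
  simp only [dif_pos ht]

theorem mmState_eq_of_agree {t : ℕ} {ω ω' : MMSample X0 X W0 W n (Fin T)}
    (hx0 : ω.1 = ω'.1) (hx : ω.2.1 = ω'.2.1)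
    (hw0 : ∀ j : Fin T, j < t → ω.2.2.1 j = ω'.2.2.1 j)
    (hw : ∀ j : Fin T, j < t → ω.2.2.2 j = ω'.2.2.2 j) :
    ∀ s ≤ t, mmState f0 f ψ0 ψ ω s = mmState f0 f ψ0 ψ ω' s := by
  intro s
  induction s using Nat.strong_induction_on with
  | _ s ih =>
    intro hs
    cases s with
    | zero => rw [mmState, mmState, hx0, hx]
    | succ r =>
      have hr : ∀ q ≤ r, mmState f0 f ψ0 ψ ω q = mmState f0 f ψ0 ψ ω' q :=
        fun q hq => ih q (by omega) (by omega)
      have hw0r : ∀ h : r < T, ω.2.2.1 ⟨r, h⟩ = ω'.2.2.1 ⟨r, h⟩ := fun _ => hw0 _ hs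
      have hwr : ∀ h : r < T, ω.2.2.2 ⟨r, h⟩ = ω'.2.2.2 ⟨r, h⟩ := fun _ => hw _ hs
      rw [mmState, mmState]
      simp (disch := omega) only [hr, hw0r, hwr]

theorem mmState_splitNoiseAt_eq {t : ℕ} (ht : t < T)
    (r : MMSample X0 X W0 W n {j // j ≠ (⟨t, ht⟩ : Fin T)}) (w w' : W0 × (Fin n → W)) :
    ∀ s ≤ t, mmState f0 f ψ0 ψ (splitNoiseAt ⟨t, ht⟩ (r, w)) s
      = mmState f0 f ψ0 ψ (splitNoiseAt ⟨t, ht⟩ (r, w')) s := by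
  have hne : ∀ j : Fin T, j < t → j ≠ ⟨t, ht⟩ := fun j hj h => by simp [h] at hj
  obtain ⟨a, b⟩ := w
  obtain ⟨a', b'⟩ := w'
  refine mmState_eq_of_agree f0 f ψ0 ψ rfl rfl (fun j hj => ?_) (fun j hj => ?_)
  · exact (splitNoiseAt_majorNoise_coe _ r a b ⟨j, hne j hj⟩).trans
      (splitNoiseAt_majorNoise_coe _ r a' b' ⟨j, hne j hj⟩).symm
  · exact (splitNoiseAt_minorNoise_coe _ r a b ⟨j, hne j hj⟩).trans
      (splitNoiseAt_minorNoise_coe _ r a' b' ⟨j, hne j hj⟩).symm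

theorem sum_inter_next_eq_sum_mul [Fintype X0] [DecidableEq X0] [Fintype W0] [DecidableEq W0]
    [Fintype W] [DecidableEq W] (ρ0 : X0 → ℝ≥0∞) (ρ : X → ℝ≥0∞) (ν0 : W0 → ℝ≥0∞)
    (ν : W → ℝ≥0∞) (hν0 : ∑ w, ν0 w = 1) (hν : ∑ w, ν w = 1) {t : ℕ} (ht : t < T)
    (z : X → ℝ) (x0 : X0) (γ : X → U) (u0 : U0) (z' : X → ℝ) (x0' : X0)
    (xr : Fin n → X) (hxr : emp xr = z) (S C : Finset (MMSample X0 X W0 W n (Fin T)))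
    (hS : ∀ ω ω', (∀ s ≤ t, mmState f0 f ψ0 ψ ω s = mmState f0 f ψ0 ψ ω' s) →
      (ω ∈ S ↔ ω' ∈ S))
    (hSval : ∀ ω ∈ S, emp (mmState f0 f ψ0 ψ ω t).2 = z ∧ (mmState f0 f ψ0 ψ ω t).1 = x0 ∧
      ψ t (fun r : Fin (t + 1) => emp (mmState f0 f ψ0 ψ ω r).2)
        (fun r : Fin (t + 1) => (mmState f0 f ψ0 ψ ω r).1) = γ ∧
      ψ0 t (fun r : Fin (t + 1) => emp (mmState f0 f ψ0 ψ ω r).2)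
        (fun r : Fin (t + 1) => (mmState f0 f ψ0 ψ ω r).1) = u0)
    (hC : ∀ ω, ω ∈ C ↔
      emp (mmState f0 f ψ0 ψ ω (t + 1)).2 = z' ∧ (mmState f0 f ψ0 ψ ω (t + 1)).1 = x0') :
    ∑ ω ∈ S ∩ C, sampleMass ρ0 ρ ν0 ν ω = (∑ ω ∈ S, sampleMass ρ0 ρ ν0 ν ω) *
      ((∑ a with f0 z x0 u0 a = x0', ν0 a) * empStepProb (fun x => f z x0 x (γ x)) ν xr z') := by
  have hagree := mmState_splitNoiseAt_eq (n := n) f0 f ψ0 ψ ht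
  refine sum_inter_eq_sum_mul_of_prod (splitNoiseAt ⟨t, ht⟩) _ _
    (fun w => ν0 w.1 * ∏ i, ν (w.2 i)) (fun r w => sampleMass_splitNoiseAt _ r w.1 w.2 ρ0 ρ ν0 ν)
    ?_ S C {r | splitNoiseAt ⟨t, ht⟩ (r, default) ∈ S} (fun r w => ?_) _ (fun r hr => ?_)
  · simp only [Fintype.sum_prod_type]
    rw [← sum_mul_sum, ← Fintype.sum_pow, hν0, hν, one_pow, one_mul]
  · rw [mem_filter_univ]
    exact hS _ _ (hagree r w default)
  · rw [mem_filter_univ] at hr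
    obtain ⟨hz, hx0, hγ, hu0⟩ := hSval _ hr
    have hCiff : ∀ w : W0 × (Fin n → W), splitNoiseAt ⟨t, ht⟩ (r, w) ∈ C ↔
        f0 z x0 u0 w.1 = x0' ∧ emp (fun i => f z x0
          ((mmState f0 f ψ0 ψ (splitNoiseAt ⟨t, ht⟩ (r, default)) t).2 i)
          (γ ((mmState f0 f ψ0 ψ (splitNoiseAt ⟨t, ht⟩ (r, default)) t).2 i)) (w.2 i)) = z' := by
      rintro ⟨a, b⟩
      rw [hC, mmState_succ_of_lt f0 f ψ0 ψ _ ht, and_comm]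
      simp (disch := omega) only [hagree r (a, b) default, hz, hx0, hγ, hu0,
        splitNoiseAt_majorNoise_self, splitNoiseAt_minorNoise_self]
    rw [filter_congr fun w _ => hCiff w, sum_filter, Fintype.sum_prod_type]
    simp only [← ite_zero_mul_ite_zero, ← sum_mul_sum, ← sum_filter]
    rw [← empStepProb_eq_of_emp_eq _ _ (hz.trans hxr.symm)]
    rfl

end State

theorem major_minor_is_controlled_markov_general
    [Fintype X] [DecidableEq X] [Fintype X0] [DecidableEq X0]
    [Fintype W] [DecidableEq W] [Inhabited W]
    [Fintype W0] [DecidableEq W0] [Inhabited W0] {n T : ℕ}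
    (f0 : (X → ℝ) → X0 → U0 → W0 → X0)
    (f : (X → ℝ) → X0 → X → U → W → X)
    (ψ0 : (t : ℕ) → (Fin (t + 1) → (X → ℝ)) → (Fin (t + 1) → X0) → U0)
    (ψ : (t : ℕ) → (Fin (t + 1) → (X → ℝ)) → (Fin (t + 1) → X0) → X → U)
    (ρ0 : X0 → ℝ≥0∞) (ρ : X → ℝ≥0∞) (ν0 : W0 → ℝ≥0∞) (ν : W → ℝ≥0∞)
    (hρ0 : ∑ x : X0, ρ0 x = 1) (hρ : ∑ x : X, ρ x = 1)
    (hν0 : ∑ w : W0, ν0 w = 1) (hν : ∑ w : W, ν w = 1)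
    (mass : (X0 × (Fin n → X) × (Fin T → W0) × (Fin T → Fin n → W)) → ℝ≥0∞)
    (hmass : ∀ ω, mass ω = ρ0 ω.1 * (∏ i, ρ (ω.2.1 i)) *
      (∏ t, ν0 (ω.2.2.1 t)) * ∏ t, ∏ i, ν (ω.2.2.2 t i))
    (t : ℕ) (ht : t < T)
    (zs : Fin (t + 1) → (X → ℝ)) (x0s : Fin (t + 1) → X0)
    (γs : Fin (t + 1) → (X → U)) (u0s : Fin (t + 1) → U0)
    (znext : X → ℝ) (x0next : X0)
    (A B C : Finset (X0 × (Fin n → X) × (Fin T → W0) × (Fin T → Fin n → W)))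
    (hA : ∀ ω, ω ∈ A ↔
      (∀ s : Fin (t + 1), emp (mmState f0 f ψ0 ψ ω (s : ℕ)).2 = zs s) ∧
      (∀ s : Fin (t + 1), (mmState f0 f ψ0 ψ ω (s : ℕ)).1 = x0s s) ∧
      (∀ s : Fin (t + 1),
        ψ (s : ℕ) (fun r : Fin ((s : ℕ) + 1) => emp (mmState f0 f ψ0 ψ ω (r : ℕ)).2)
          (fun r : Fin ((s : ℕ) + 1) => (mmState f0 f ψ0 ψ ω (r : ℕ)).1) = γs s) ∧
      (∀ s : Fin (t + 1),
        ψ0 (s : ℕ) (fun r : Fin ((s : ℕ) + 1) => emp (mmState f0 f ψ0 ψ ω (r : ℕ)).2)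
          (fun r : Fin ((s : ℕ) + 1) => (mmState f0 f ψ0 ψ ω (r : ℕ)).1) = u0s s))
    (hB : ∀ ω, ω ∈ B ↔
      emp (mmState f0 f ψ0 ψ ω t).2 = zs (Fin.last t) ∧
      (mmState f0 f ψ0 ψ ω t).1 = x0s (Fin.last t) ∧
      ψ t (fun r : Fin (t + 1) => emp (mmState f0 f ψ0 ψ ω (r : ℕ)).2)
        (fun r : Fin (t + 1) => (mmState f0 f ψ0 ψ ω (r : ℕ)).1) = γs (Fin.last t) ∧
      ψ0 t (fun r : Fin (t + 1) => emp (mmState f0 f ψ0 ψ ω (r : ℕ)).2)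
        (fun r : Fin (t + 1) => (mmState f0 f ψ0 ψ ω (r : ℕ)).1) = u0s (Fin.last t))
    (hC : ∀ ω, ω ∈ C ↔
      emp (mmState f0 f ψ0 ψ ω (t + 1)).2 = znext ∧
      (mmState f0 f ψ0 ψ ω (t + 1)).1 = x0next)
    (hApos : ∑ ω ∈ A, mass ω ≠ 0) (hBpos : ∑ ω ∈ B, mass ω ≠ 0) :
    (∑ ω ∈ A ∩ C, mass ω) / (∑ ω ∈ A, mass ω) =
      (∑ ω ∈ B ∩ C, mass ω) / (∑ ω ∈ B, mass ω) := by
  obtain rfl : mass = sampleMass ρ0 ρ ν0 ν := funext hmass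
  have hAloc : ∀ ω ω', (∀ s ≤ t, mmState f0 f ψ0 ψ ω s = mmState f0 f ψ0 ψ ω' s) →
      (ω ∈ A ↔ ω' ∈ A) := fun ω ω' h => by simp (disch := omega) only [hA, h]
  have hBloc : ∀ ω ω', (∀ s ≤ t, mmState f0 f ψ0 ψ ω s = mmState f0 f ψ0 ψ ω' s) →
      (ω ∈ B ↔ ω' ∈ B) := fun ω ω' h => by simp (disch := omega) only [hB, h]
  have hBval : ∀ ω ∈ B, _ := fun ω hω => (hB ω).1 hω
  have hAB : A ⊆ B := fun ω hω => by
    obtain ⟨hz, hx0, hγ, hu0⟩ := (hA ω).1 hω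
    exact (hB ω).2 ⟨hz (Fin.last t), hx0 (Fin.last t), hγ (Fin.last t), hu0 (Fin.last t)⟩
  obtain ⟨ω₀, hω₀⟩ := nonempty_of_sum_ne_zero hApos
  have hfin : ∀ D : Finset (MMSample X0 X W0 W n (Fin T)),
      ∑ ω ∈ D, sampleMass ρ0 ρ ν0 ν ω ≠ ⊤ := fun D =>
    ne_top_of_le_ne_top ENNReal.one_ne_top
      ((sum_le_sum_of_subset (subset_univ D)).trans (sum_sampleMass hρ0 hρ hν0 hν).le)
  rw [sum_inter_next_eq_sum_mul f0 f ψ0 ψ ρ0 ρ ν0 ν hν0 hν ht _ _ _ _ znext x0next _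
      (hBval ω₀ (hAB hω₀)).1 A C hAloc (fun ω hω => hBval ω (hAB hω)) hC,
    sum_inter_next_eq_sum_mul f0 f ψ0 ψ ρ0 ρ ν0 ν hν0 hν ht _ _ _ _ znext x0next _
      (hBval ω₀ (hAB hω₀)).1 B C hBloc hBval hC,
    ENNReal.mul_div_right_comm, ENNReal.mul_div_right_comm, ENNReal.div_self hApos (hfin A),
    ENNReal.div_self hBpos (hfin B)]

/-- In the major-minor mean-field model, the pair `(Z_t, X⁰_t)` is a controlled Markov
process with controls `(γ_t, U⁰_t)`:
`P(Z_{t+1} = z, X⁰_{t+1} = x⁰ | Z_{0:t}, X⁰_{0:t}, γ_{0:t}, U⁰_{0:t})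
  = P(Z_{t+1} = z, X⁰_{t+1} = x⁰ | Z_t, X⁰_t, γ_t, U⁰_t)`.
Probabilities of events are sums of the product-form masses (minor noises i.i.d. across
subsystems and independent of the major noise); conditional probabilities are ratios. -/
theorem major_minor_is_controlled_markov
    [Fintype X] [DecidableEq X] [Fintype X0] [DecidableEq X0]
    [Fintype U] [DecidableEq U] [Fintype U0] [DecidableEq U0]
    [Fintype W] [DecidableEq W] [Inhabited W]
    [Fintype W0] [DecidableEq W0] [Inhabited W0] {n T : ℕ} (hn : 1 ≤ n)
    (f0 : (X → ℝ) → X0 → U0 → W0 → X0)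
    (f : (X → ℝ) → X0 → X → U → W → X)
    (ψ0 : (t : ℕ) → (Fin (t + 1) → (X → ℝ)) → (Fin (t + 1) → X0) → U0)
    (ψ : (t : ℕ) → (Fin (t + 1) → (X → ℝ)) → (Fin (t + 1) → X0) → X → U)
    (ρ0 : X0 → ℝ≥0∞) (ρ : X → ℝ≥0∞) (ν0 : W0 → ℝ≥0∞) (ν : W → ℝ≥0∞)
    (hρ0 : ∑ x : X0, ρ0 x = 1) (hρ : ∑ x : X, ρ x = 1)
    (hν0 : ∑ w : W0, ν0 w = 1) (hν : ∑ w : W, ν w = 1)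
    (mass : (X0 × (Fin n → X) × (Fin T → W0) × (Fin T → Fin n → W)) → ℝ≥0∞)
    (hmass : ∀ ω, mass ω = ρ0 ω.1 * (∏ i, ρ (ω.2.1 i)) *
      (∏ t, ν0 (ω.2.2.1 t)) * ∏ t, ∏ i, ν (ω.2.2.2 t i))
    (t : ℕ) (ht : t < T)
    (zs : Fin (t + 1) → (X → ℝ)) (x0s : Fin (t + 1) → X0)
    (γs : Fin (t + 1) → (X → U)) (u0s : Fin (t + 1) → U0)
    (znext : X → ℝ) (x0next : X0)
    (A B C : Finset (X0 × (Fin n → X) × (Fin T → W0) × (Fin T → Fin n → W)))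
    (hA : ∀ ω, ω ∈ A ↔
      (∀ s : Fin (t + 1), emp (mmState f0 f ψ0 ψ ω (s : ℕ)).2 = zs s) ∧
      (∀ s : Fin (t + 1), (mmState f0 f ψ0 ψ ω (s : ℕ)).1 = x0s s) ∧
      (∀ s : Fin (t + 1),
        ψ (s : ℕ) (fun r : Fin ((s : ℕ) + 1) => emp (mmState f0 f ψ0 ψ ω (r : ℕ)).2)
          (fun r : Fin ((s : ℕ) + 1) => (mmState f0 f ψ0 ψ ω (r : ℕ)).1) = γs s) ∧
      (∀ s : Fin (t + 1),
        ψ0 (s : ℕ) (fun r : Fin ((s : ℕ) + 1) => emp (mmState f0 f ψ0 ψ ω (r : ℕ)).2)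
          (fun r : Fin ((s : ℕ) + 1) => (mmState f0 f ψ0 ψ ω (r : ℕ)).1) = u0s s))
    (hB : ∀ ω, ω ∈ B ↔
      emp (mmState f0 f ψ0 ψ ω t).2 = zs (Fin.last t) ∧
      (mmState f0 f ψ0 ψ ω t).1 = x0s (Fin.last t) ∧
      ψ t (fun r : Fin (t + 1) => emp (mmState f0 f ψ0 ψ ω (r : ℕ)).2)
        (fun r : Fin (t + 1) => (mmState f0 f ψ0 ψ ω (r : ℕ)).1) = γs (Fin.last t) ∧
      ψ0 t (fun r : Fin (t + 1) => emp (mmState f0 f ψ0 ψ ω (r : ℕ)).2)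
        (fun r : Fin (t + 1) => (mmState f0 f ψ0 ψ ω (r : ℕ)).1) = u0s (Fin.last t))
    (hC : ∀ ω, ω ∈ C ↔
      emp (mmState f0 f ψ0 ψ ω (t + 1)).2 = znext ∧
      (mmState f0 f ψ0 ψ ω (t + 1)).1 = x0next)
    (hApos : ∑ ω ∈ A, mass ω ≠ 0) (hBpos : ∑ ω ∈ B, mass ω ≠ 0) :
    (∑ ω ∈ A ∩ C, mass ω) / (∑ ω ∈ A, mass ω) =
      (∑ ω ∈ B ∩ C, mass ω) / (∑ ω ∈ B, mass ω) :=
  major_minor_is_controlled_markov_general f0 f ψ0 ψ ρ0 ρ ν0 ν hρ0 hρ hν0 hν mass hmass t ht zs x0s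
    γs u0s znext x0next A B C hA hB hC hApos hBpos
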